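/- arXiv:1907.06624 — 4 statements merged into one kernel-verified Lean document; each statement's English description precedes it below -/
import Mathlib

section
/- The covariant Liouvillian is symmetric (Hermitian) with respect to the L² inner product: for every smooth H : ℝⁿ × ℝⁿ → ℝ and all smooth compactly supported Ψ₁, Ψ₂ : ℝⁿ × ℝⁿ → ℂ, one has ∫_{ℝ²ⁿ} conj(Ψ₁(z)) · (L̂_H Ψ₂)(z) dz = ∫_{ℝ²ⁿ} conj((L̂_H Ψ₁)(z)) · Ψ₂(z) dz, where dz denotes the Lebesgue measure on ℝ²ⁿ. -/
open Complex

noncomputable section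

/-- Classical phase space `T*Q = ℝⁿ × ℝⁿ` with coordinates `z = (q, p)`. -/
abbrev PS (n : ℕ) := (Fin n → ℝ) × (Fin n → ℝ)

variable {n : ℕ}

/-- Partial derivative `∂f/∂qⁱ` of a complex-valued function on phase space. -/
noncomputable def dq (i : Fin n) (f : PS n → ℂ) (z : PS n) : ℂ :=
  fderiv ℝ f z (Pi.single i 1, 0)

/-- Partial derivative `∂f/∂pᵢ` of a complex-valued function on phase space. -/
noncomputable def dp (i : Fin n) (f : PS n → ℂ) (z : PS n) : ℂ :=
  fderiv ℝ f z (0, Pi.single i 1)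

/-- Partial derivative `∂f/∂qⁱ` of a real-valued function on phase space. -/
noncomputable def dqR (i : Fin n) (f : PS n → ℝ) (z : PS n) : ℝ :=
  fderiv ℝ f z (Pi.single i 1, 0)

/-- Partial derivative `∂f/∂pᵢ` of a real-valued function on phase space. -/
noncomputable def dpR (i : Fin n) (f : PS n → ℝ) (z : PS n) : ℝ :=
  fderiv ℝ f z (0, Pi.single i 1)

/-- Canonical Poisson bracket `{F,G} = Σᵢ (∂F/∂qⁱ ∂G/∂pᵢ − ∂F/∂pᵢ ∂G/∂qⁱ)`,
extended ℂ-bilinearly to complex-valued functions. -/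
noncomputable def pb (F G : PS n → ℂ) (z : PS n) : ℂ :=
  ∑ i, (dq i F z * dp i G z - dp i F z * dq i G z)

/-- Canonical Poisson bracket of real-valued functions. -/
noncomputable def pbR (F G : PS n → ℝ) (z : PS n) : ℝ :=
  ∑ i, (dqR i F z * dpR i G z - dpR i F z * dqR i G z)

/-- The covariant Liouvillian (prequantum operator)
`L̂_H Ψ := iℏ {H, Ψ} − (Σᵢ pᵢ ∂H/∂pᵢ − H) Ψ`. -/
noncomputable def Liouv (ℏ : ℝ) (H : PS n → ℝ) (Ψ : PS n → ℂ) (z : PS n) : ℂ :=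
  Complex.I * ℏ * pb (fun w => (H w : ℂ)) Ψ z
    - (((∑ i, z.2 i * dpR i H z) - H z : ℝ) : ℂ) * Ψ z

open MeasureTheory

/-!
The multiplication part of `L̂_H` is multiplication by a real function, hence symmetric. For the
bracket part, the Leibniz rule and the reality of `H` give
`conj Ψ₁ · iℏ{H, Ψ₂} - conj (iℏ{H, Ψ₁}) · Ψ₂ = iℏ{H, conj Ψ₁ · Ψ₂}`, and the integral of `{H, Φ}`
vanishes for compactly supported `Φ`: integrating by parts moves both derivatives onto `H`, where
the two terms of the bracket cancel by the symmetry of second derivatives.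
-/

open ComplexConjugate

section Calculus

variable {E F : Type*} [NormedAddCommGroup E] [NormedSpace ℝ E] [NormedAddCommGroup F]
  [NormedSpace ℝ F]

theorem ContDiff.continuous_fderiv_apply_const {f : E → F} (hf : ContDiff ℝ 1 f) (v : E) :
    Continuous (fderiv ℝ f · v) :=
  (hf.continuous_fderiv one_ne_zero).clm_apply continuous_const

theorem fderiv_fderiv_apply_comm {f : E → F} (hf : ContDiff ℝ 2 f) (z u v : E) :
    fderiv ℝ (fderiv ℝ f · u) z v = fderiv ℝ (fderiv ℝ f · v) z u := by
  have hdf : DifferentiableAt ℝ (fderiv ℝ f) z :=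
    (hf.fderiv_right (m := 1) le_rfl).differentiable one_ne_zero z
  have h (w : E) : fderiv ℝ (fderiv ℝ f · w) z = (fderiv ℝ (fderiv ℝ f) z).flip w := by
    simp [fderiv_clm_apply hdf (differentiableAt_const w)]
  rw [h, h]
  exact hf.contDiffAt.isSymmSndFDerivAt (by simp) v u

theorem fderiv_ofReal_apply {f : E → ℝ} {z : E} (hf : DifferentiableAt ℝ f z) (v : E) :
    fderiv ℝ (fun w => (f w : ℂ)) z v = fderiv ℝ f z v :=
  congrArg (· v) (ofRealCLM.hasFDerivAt.comp z hf.hasFDerivAt).fderiv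

theorem fderiv_conj_apply (f : E → ℂ) (z v : E) : fderiv ℝ (fun w => conj (f w)) z v = conj (fderiv ℝ f z v) :=
  congrArg (· v) (conjCLE.comp_fderiv (f := f) (x := z))

variable [FiniteDimensional ℝ E] [MeasurableSpace E] [BorelSpace E] {μ : Measure E}
  [μ.IsAddHaarMeasure] {𝕜 : Type*} [NormedField 𝕜] [NormedAlgebra ℝ 𝕜]

theorem integral_mul_fderiv_eq_neg_fderiv_mul_of_hasCompactSupport {f g : E → 𝕜}
    (hf : ContDiff ℝ 1 f) (hg : ContDiff ℝ 1 g) (hcg : HasCompactSupport g) (v : E) :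
    ∫ z, f z * fderiv ℝ g z v ∂μ = - ∫ z, fderiv ℝ f z v * g z ∂μ :=
  integral_mul_fderiv_eq_neg_fderiv_mul_of_integrable
    ((hf.continuous_fderiv_apply_const v).mul hg.continuous
      |>.integrable_of_hasCompactSupport hcg.mul_left)
    (hf.continuous.mul (hg.continuous_fderiv_apply_const v)
      |>.integrable_of_hasCompactSupport (hcg.fderiv_apply ℝ v).mul_left)
    (hf.continuous.mul hg.continuous |>.integrable_of_hasCompactSupport hcg.mul_left)
    (fun x _ => hf.differentiable one_ne_zero x) (fun x _ => hg.differentiable one_ne_zero x)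

theorem integral_fderiv_mul_fderiv_comm {f g : E → 𝕜} (hf : ContDiff ℝ 2 f)
    (hg : ContDiff ℝ 1 g) (hcg : HasCompactSupport g) (u v : E) :
    ∫ z, fderiv ℝ f z u * fderiv ℝ g z v ∂μ = ∫ z, fderiv ℝ f z v * fderiv ℝ g z u ∂μ := by
  have hf' (w : E) : ContDiff ℝ 1 (fderiv ℝ f · w) :=
    (hf.fderiv_right (m := 1) le_rfl).clm_apply contDiff_const
  rw [integral_mul_fderiv_eq_neg_fderiv_mul_of_hasCompactSupport (hf' u) hg hcg,
    integral_mul_fderiv_eq_neg_fderiv_mul_of_hasCompactSupport (hf' v) hg hcg]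
  simp_rw [fderiv_fderiv_apply_comm hf _ u v]

end Calculus

-- `volume` on a product is not syntactically a `Measure.prod`, so instance search misses this.
instance PS.isAddHaarMeasure_volume : (volume : Measure (PS n)).IsAddHaarMeasure :=
  Measure.prod.instIsAddHaarMeasure _ _

theorem integral_pb_eq_zero {F Φ : PS n → ℂ} (hF : ContDiff ℝ 2 F) (hΦ : ContDiff ℝ 1 Φ)
    (hcΦ : HasCompactSupport Φ) : ∫ z, pb F Φ z = 0 := by
  have hint (u v : PS n) : Integrable (fun z => fderiv ℝ F z u * fderiv ℝ Φ z v) :=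
    ((hF.of_le one_le_two).continuous_fderiv_apply_const u).mul
      (hΦ.continuous_fderiv_apply_const v) |>.integrable_of_hasCompactSupport
      (hcΦ.fderiv_apply ℝ v).mul_left
  simp only [pb, dq, dp]
  rw [integral_finsetSum _ fun i _ => ?_]
  · refine Finset.sum_eq_zero fun i _ => ?_
    rw [integral_sub (hint _ _) (hint _ _), integral_fderiv_mul_fderiv_comm hF hΦ hcΦ, sub_self]
  · exact (hint _ _).sub (hint _ _)

theorem pb_mul_right (F : PS n → ℂ) {f g : PS n → ℂ} {z : PS n} (hf : DifferentiableAt ℝ f z)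
    (hg : DifferentiableAt ℝ g z) :
    pb F (fun w => f w * g w) z = f z * pb F g z + pb F f z * g z := by
  simp only [pb, dq, dp, fderiv_fun_mul hf hg, add_apply, smul_apply, smul_eq_mul,
    Finset.mul_sum, Finset.sum_mul, ← Finset.sum_add_distrib]
  exact Finset.sum_congr rfl fun i _ => by ring

theorem pb_ofReal_conj {H : PS n → ℝ} (f : PS n → ℂ) {z : PS n} (hH : DifferentiableAt ℝ H z) :
    pb (fun w => (H w : ℂ)) (fun w => conj (f w)) z = conj (pb (fun w => (H w : ℂ)) f z) := by
  simp [pb, dq, dp, fderiv_ofReal_apply hH, fderiv_conj_apply]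

theorem conj_mul_liouv_sub_conj_liouv_mul (ℏ : ℝ) {H : PS n → ℝ} {Ψ₁ Ψ₂ : PS n → ℂ} {z : PS n}
    (hH : DifferentiableAt ℝ H z) (hΨ₁ : DifferentiableAt ℝ Ψ₁ z)
    (hΨ₂ : DifferentiableAt ℝ Ψ₂ z) :
    conj (Ψ₁ z) * Liouv ℏ H Ψ₂ z - conj (Liouv ℏ H Ψ₁ z) * Ψ₂ z
      = I * ℏ * pb (fun w => (H w : ℂ)) (fun w => conj (Ψ₁ w) * Ψ₂ w) z := by
  have hconjΨ₁ : DifferentiableAt ℝ (fun w => conj (Ψ₁ w)) z :=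
    conjCLE.differentiableAt.comp z hΨ₁
  rw [pb_mul_right _ hconjΨ₁ hΨ₂, pb_ofReal_conj _ hH]
  simp only [Liouv, map_sub, map_mul, conj_ofReal, conj_I]
  ring

theorem continuous_liouv (ℏ : ℝ) {H : PS n → ℝ} {Ψ : PS n → ℂ} (hH : ContDiff ℝ 1 H)
    (hΨ : ContDiff ℝ 1 Ψ) : Continuous (Liouv ℏ H Ψ) := by
  have hHc : ContDiff ℝ 1 (fun w => (H w : ℂ)) := ofRealCLM.contDiff.comp hH
  have := hHc.continuous_fderiv_apply_const
  have := hΨ.continuous_fderiv_apply_const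
  have := hH.continuous_fderiv_apply_const
  unfold Liouv pb dq dp dpR
  fun_prop

theorem HasCompactSupport.liouv (ℏ : ℝ) (H : PS n → ℝ) {Ψ : PS n → ℂ}
    (hΨ : HasCompactSupport Ψ) : HasCompactSupport (Liouv ℏ H Ψ) := by
  refine hΨ.mono' fun z hz => ?_
  by_contra hz'
  simp [Liouv, pb, dq, dp, fderiv_of_notMem_tsupport ℝ hz',
    image_eq_zero_of_notMem_tsupport hz'] at hz

theorem liouvillian_symmetric_general (n : ℕ) (ℏ : ℝ)
    (H : PS n → ℝ) (hH : ContDiff ℝ (⊤ : ℕ∞) H)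
    (Ψ₁ Ψ₂ : PS n → ℂ)
    (hΨ₁ : ContDiff ℝ (⊤ : ℕ∞) Ψ₁) (hΨ₂ : ContDiff ℝ (⊤ : ℕ∞) Ψ₂)
    (hc₂ : HasCompactSupport Ψ₂) :
    ∫ z : PS n, (starRingEnd ℂ) (Ψ₁ z) * Liouv ℏ H Ψ₂ z
      = ∫ z : PS n, (starRingEnd ℂ) (Liouv ℏ H Ψ₁ z) * Ψ₂ z := by
  have two_le : (2 : WithTop ℕ∞) ≤ (⊤ : ℕ∞) := WithTop.coe_le_coe.2 le_top
  have hH₂ : ContDiff ℝ 2 H := hH.of_le two_le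
  have hH₁ : ContDiff ℝ 1 H := hH.of_le (one_le_two.trans two_le)
  have hΨ₁₁ : ContDiff ℝ 1 Ψ₁ := hΨ₁.of_le (one_le_two.trans two_le)
  have hΨ₂₁ : ContDiff ℝ 1 Ψ₂ := hΨ₂.of_le (one_le_two.trans two_le)
  have hconjΨ₁ : ContDiff ℝ 1 (fun z => conj (Ψ₁ z)) := conjCLE.contDiff.comp hΨ₁₁
  have hA : Integrable (fun z => conj (Ψ₁ z) * Liouv ℏ H Ψ₂ z) :=
    (hconjΨ₁.continuous.mul (continuous_liouv ℏ hH₁ hΨ₂₁)).integrable_of_hasCompactSupport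
      (hc₂.liouv ℏ H).mul_left
  have hB : Integrable (fun z => conj (Liouv ℏ H Ψ₁ z) * Ψ₂ z) :=
    ((continuous_conj.comp (continuous_liouv ℏ hH₁ hΨ₁₁)).mul hΨ₂.continuous
      ).integrable_of_hasCompactSupport hc₂.mul_left
  rw [← sub_eq_zero, ← integral_sub hA hB]
  simp_rw [conj_mul_liouv_sub_conj_liouv_mul ℏ (hH₁.differentiable one_ne_zero _)
    (hΨ₁₁.differentiable one_ne_zero _) (hΨ₂₁.differentiable one_ne_zero _)]
  have hHc : ContDiff ℝ 2 (fun w => (H w : ℂ)) := ofRealCLM.contDiff.comp hH₂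
  rw [integral_const_mul, integral_pb_eq_zero hHc (hconjΨ₁.mul hΨ₂₁) hc₂.mul_left, mul_zero]

/-- The covariant Liouvillian is symmetric with respect to the
`L²` inner product on compactly supported smooth functions. -/
theorem liouvillian_symmetric (n : ℕ) (ℏ : ℝ) (hℏ : 0 < ℏ)
    (H : PS n → ℝ) (hH : ContDiff ℝ (⊤ : ℕ∞) H)
    (Ψ₁ Ψ₂ : PS n → ℂ)
    (hΨ₁ : ContDiff ℝ (⊤ : ℕ∞) Ψ₁) (hΨ₂ : ContDiff ℝ (⊤ : ℕ∞) Ψ₂)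
    (hc₁ : HasCompactSupport Ψ₁) (hc₂ : HasCompactSupport Ψ₂) :
    ∫ z : PS n, (starRingEnd ℂ) (Ψ₁ z) * Liouv ℏ H Ψ₂ z
      = ∫ z : PS n, (starRingEnd ℂ) (Liouv ℏ H Ψ₁ z) * Ψ₂ z :=
  liouvillian_symmetric_general n ℏ H hH Ψ₁ Ψ₂ hΨ₁ hΨ₂ hc₂
end
end

section
/- Madelung transform of the Koopman–van Hove equation: let H : ℝⁿ × ℝⁿ → ℝ be smooth and let R, S : ℝ × (ℝⁿ × ℝⁿ) → ℝ be smooth with R(t,z) > 0 for all (t,z). Define Ψ(t,z) := R(t,z) e^{i S(t,z)/ħ}. Then Ψ satisfies the Koopman–van Hove equation iħ ∂ₜΨ = iħ {H, Ψ} − (Σᵢ pᵢ ∂H/∂pᵢ − H) Ψ if and only if ∂ₜS + {S, H} = Σᵢ pᵢ ∂H/∂pᵢ − H and ∂ₜR + {R, H} = 0. -/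
/-!
Both `∂ₜΨ` and `{H, Ψ}` of `Ψ = R e^{iS/ℏ}` are of the form `(X + i R Y / ℏ) e^{iS/ℏ}` with
`X, Y` real. Dividing the KvH equation by the nonvanishing phase leaves the complex equation
`iℏ (∂ₜR + {R,H}) − R (∂ₜS + {S,H} − L) = 0`; since `ℏ ≠ 0` and `R ≠ 0`, its imaginary part is the
transport equation for `R` and its real part the equation for `S`.
-/

open Complex

noncomputable section

variable {n : ℕ}

section
variable {E : Type*} [NormedAddCommGroup E] [NormedSpace ℝ E] {f g : E → ℝ} {z : E}

lemma hasFDerivAt_ofReal_comp (hf : DifferentiableAt ℝ f z) :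
    HasFDerivAt (fun w => (f w : ℂ)) (ofRealCLM.comp (fderiv ℝ f z)) z :=
  ofRealCLM.hasFDerivAt.comp z hf.hasFDerivAt

lemma fderiv_ofReal_comp_apply (hf : DifferentiableAt ℝ f z) (v : E) :
    fderiv ℝ (fun w => (f w : ℂ)) z v = fderiv ℝ f z v := by
  rw [(hasFDerivAt_ofReal_comp hf).fderiv]
  rfl

lemma fderiv_polar_apply (c : ℝ) (hf : DifferentiableAt ℝ f z) (hg : DifferentiableAt ℝ g z)
    (v : E) :
    fderiv ℝ (fun w => (f w : ℂ) * exp (I * g w / c)) z v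
      = (fderiv ℝ f z v + f z * (I * fderiv ℝ g z v / c)) * exp (I * g z / c) := by
  have hphase :
      HasFDerivAt (fun w => I * g w / c) ((I / c) • ofRealCLM.comp (fderiv ℝ g z)) z := by
    simpa only [div_mul_eq_mul_div] using (hasFDerivAt_ofReal_comp hg).const_mul (I / c)
  have hΨ : HasFDerivAt (fun w => (f w : ℂ) * exp (I * g w / c)) _ z :=
    (hasFDerivAt_ofReal_comp hf).mul hphase.cexp
  rw [hΨ.fderiv]
  simp only [add_apply, smul_apply, ContinuousLinearMap.comp_apply, ofRealCLM_apply,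
    smul_eq_mul]
  ring

end

lemma deriv_polar (c : ℝ) {f g : ℝ → ℝ} {t : ℝ} (hf : DifferentiableAt ℝ f t)
    (hg : DifferentiableAt ℝ g t) :
    deriv (fun s => (f s : ℂ) * exp (I * g s / c)) t
      = (deriv f t + f t * (I * deriv g t / c)) * exp (I * g t / c) := by
  simpa only [fderiv_apply_one_eq_deriv] using fderiv_polar_apply c hf hg 1

lemma pb_ofReal_polar (c : ℝ) {H f g : PS n → ℝ} {z : PS n} (hH : DifferentiableAt ℝ H z)
    (hf : DifferentiableAt ℝ f z) (hg : DifferentiableAt ℝ g z) :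
    pb (fun w => (H w : ℂ)) (fun w => (f w : ℂ) * exp (I * g w / c)) z
      = -((pbR f H z + f z * (I * pbR g H z / c)) * exp (I * g z / c)) := by
  simp only [pb, pbR, dq, dp, dqR, dpR, fderiv_ofReal_comp_apply hH,
    fderiv_polar_apply c hf hg]
  push_cast
  simp only [Finset.mul_sum, Finset.sum_div, Finset.sum_mul, ← Finset.sum_add_distrib,
    ← Finset.sum_neg_distrib]
  exact Finset.sum_congr rfl fun i _ => by ring

lemma kvh_polar_iff {c ρ r' s' a b L : ℝ} (hc : c ≠ 0) (hρ : ρ ≠ 0) {e : ℂ} (he : e ≠ 0) :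
    I * c * ((r' + ρ * (I * s' / c)) * e) = I * c * -((a + ρ * (I * b / c)) * e) - L * (ρ * e)
      ↔ s' + b = L ∧ r' + a = 0 := by
  have key : I * c * ((r' + ρ * (I * s' / c)) * e)
        - (I * c * -((a + ρ * (I * b / c)) * e) - L * (ρ * e))
      = e * ⟨-ρ * (s' + b - L), c * (r' + a)⟩ := by
    have hc' : (c : ℂ) ≠ 0 := ofReal_ne_zero.2 hc
    rw [mk_eq_add_mul_I]
    push_cast
    field_simp
    linear_combination (ρ * (s' + b) : ℂ) * I_sq
  rw [← sub_eq_zero, key, mul_eq_zero, or_iff_right he, Complex.ext_iff]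
  simp [hρ, hc, sub_eq_zero]

/-- Madelung transform of the Koopman–van Hove equation:
`Ψ = R e^{iS/ℏ}` solves the KvH equation iff `∂ₜS + {S,H} = Σᵢ pᵢ ∂H/∂pᵢ − H`
and `∂ₜR + {R,H} = 0`. -/
theorem madelung_kvh (n : ℕ) (ℏ : ℝ) (hℏ : 0 < ℏ)
    (H : PS n → ℝ) (hH : ContDiff ℝ (⊤ : ℕ∞) H)
    (R S : ℝ × PS n → ℝ)
    (hR : ContDiff ℝ (⊤ : ℕ∞) R) (hS : ContDiff ℝ (⊤ : ℕ∞) S)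
    (hpos : ∀ t z, 0 < R (t, z)) :
    (∀ (t : ℝ) (z : PS n),
        Complex.I * ℏ * deriv (fun s => (R (s, z) : ℂ) * Complex.exp (Complex.I * S (s, z) / ℏ)) t
          = Complex.I * ℏ *
              pb (fun w => (H w : ℂ))
                (fun w => (R (t, w) : ℂ) * Complex.exp (Complex.I * S (t, w) / ℏ)) z
            - (((∑ i, z.2 i * dpR i H z) - H z : ℝ) : ℂ) *
                ((R (t, z) : ℂ) * Complex.exp (Complex.I * S (t, z) / ℏ)))
      ↔
    (∀ (t : ℝ) (z : PS n),
        (deriv (fun s => S (s, z)) t + pbR (fun w => S (t, w)) H z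
            = (∑ i, z.2 i * dpR i H z) - H z)
          ∧ (deriv (fun s => R (s, z)) t + pbR (fun w => R (t, w)) H z = 0)) := by
  have hHd : Differentiable ℝ H := hH.differentiable (by simp)
  have hRd : Differentiable ℝ R := hR.differentiable (by simp)
  have hSd : Differentiable ℝ S := hS.differentiable (by simp)
  refine forall₂_congr fun t z => ?_
  rw [deriv_polar ℏ (by fun_prop) (by fun_prop),
    pb_ofReal_polar ℏ (hHd z) (by fun_prop) (by fun_prop)]
  exact kvh_polar_iff hℏ.ne' (hpos t z).ne' (exp_ne_zero _)
end
end

section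
/- If H : ℝⁿ × ℝⁿ → ℝ is smooth and Ψ : ℝ × (ℝⁿ × ℝⁿ) → ℂ is smooth and satisfies the Koopman–van Hove equation iħ ∂ₜΨ = iħ {H, Ψ} − (Σᵢ pᵢ ∂H/∂pᵢ − H) Ψ, then the function ρ(t,z) := |Ψ(t,z)|² + Σᵢ ∂_{pᵢ}(pᵢ |Ψ(t,z)|²) + iħ {Ψ(t,·), conj(Ψ(t,·))}(z) is real-valued and satisfies the classical Liouville equation ∂ₜρ = {H, ρ}. -/
open Complex

noncomputable section

variable {n : ℕ}

/-- The momentum-map expression of the classical Liouville density,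
`ρ(Ψ) := |Ψ|² + Σᵢ ∂_{pᵢ}(pᵢ |Ψ|²) + iℏ {Ψ, conj Ψ}`. -/
noncomputable def rhoKvH (ℏ : ℝ) (Ψ : PS n → ℂ) (z : PS n) : ℂ :=
  (Complex.normSq (Ψ z) : ℂ)
    + ∑ i, dp i (fun w => (w.2 i : ℂ) * (Complex.normSq (Ψ w) : ℂ)) z
    + Complex.I * ℏ * pb Ψ (fun w => (starRingEnd ℂ) (Ψ w)) z

/-!
Everything is lifted to spacetime `ℝ × ℝ²ⁿ`, where `∂ₜ`, `∂_{qⁱ}` and `∂_{pᵢ}` are derivatives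
along constant vectors and therefore commute. Dividing the KvH equation by `iħ` gives
`∂ₜΨ = {H, Ψ} + i V Ψ` with the real potential `V = (Σᵢ pᵢ ∂H/∂pᵢ − H) / ħ`, so
`∂ₜ|Ψ|² = {H, |Ψ|²}` and, by the Jacobi identity, `∂ₜ{Ψ, Ψ̄} = {H, {Ψ, Ψ̄}} + i {V, |Ψ|²}`.
With the Euler field `E = Σᵢ pᵢ ∂_{pᵢ}` one has `Σᵢ ∂_{pᵢ}(pᵢ f) = n f + E f`, and the bracket has
degree `−1` under `E`: `E{H, f} = {E H − H, f} + {H, E f}`. The term `{E H − H, |Ψ|²}` produced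
this way is cancelled exactly by `iħ · i {V, |Ψ|²}`, which leaves `∂ₜρ = {H, ρ}`.
Reality: `|Ψ|²` and `E|Ψ|²` are real and `{Ψ, Ψ̄}` is imaginary, since `conj {Ψ, Ψ̄} = {Ψ̄, Ψ}`.
-/

open ComplexConjugate

theorem Finset.sum_sum_eq_zero_of_antisymm {ι M : Type*} [AddCommGroup M] [IsAddTorsionFree M]
    (s : Finset ι) {f : ι → ι → M} (hf : ∀ i j, f i j = -f j i) :
    ∑ i ∈ s, ∑ j ∈ s, f i j = 0 := by
  refine self_eq_neg.mp ?_
  conv_lhs => rw [Finset.sum_comm]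
  simp only [← Finset.sum_neg_distrib]
  exact Finset.sum_congr rfl fun j _ => Finset.sum_congr rfl fun i _ => hf i j

section DirDeriv

variable {E : Type*} [NormedAddCommGroup E] [NormedSpace ℝ E]

def dirDeriv (v : E) (f : E → ℂ) (x : E) : ℂ :=
  fderiv ℝ f x v

variable {f g : E → ℂ} {x : E}

theorem ContDiff.conj {m : WithTop ℕ∞} (hf : ContDiff ℝ m f) :
    ContDiff ℝ m (fun y => conj (f y)) :=
  conjCLE.toContinuousLinearMap.contDiff.comp hf

theorem ContDiff.differentiable_dirDeriv (hf : ContDiff ℝ 2 f) (v : E) :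
    Differentiable ℝ (dirDeriv v f) :=
  ((ContinuousLinearMap.apply ℝ ℂ v).contDiff.comp
    (hf.fderiv_right (m := 1) le_rfl)).differentiable one_ne_zero

theorem dirDeriv_add (hf : DifferentiableAt ℝ f x) (hg : DifferentiableAt ℝ g x) (v : E) :
    dirDeriv v (fun y => f y + g y) x = dirDeriv v f x + dirDeriv v g x := by
  simp [dirDeriv, fderiv_fun_add hf hg]

theorem dirDeriv_sub (hf : DifferentiableAt ℝ f x) (hg : DifferentiableAt ℝ g x) (v : E) :
    dirDeriv v (fun y => f y - g y) x = dirDeriv v f x - dirDeriv v g x := by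
  simp [dirDeriv, fderiv_fun_sub hf hg]

theorem dirDeriv_mul (hf : DifferentiableAt ℝ f x) (hg : DifferentiableAt ℝ g x) (v : E) :
    dirDeriv v (fun y => f y * g y) x = dirDeriv v f x * g x + f x * dirDeriv v g x := by
  simp only [dirDeriv, fderiv_fun_mul hf hg, add_apply, smul_apply, smul_eq_mul]
  ring

theorem dirDeriv_const_mul (hf : DifferentiableAt ℝ f x) (c : ℂ) (v : E) :
    dirDeriv v (fun y => c * f y) x = c * dirDeriv v f x := by
  simp [dirDeriv, fderiv_const_mul hf c]

theorem dirDeriv_sum {ι : Type*} {s : Finset ι} {f : ι → E → ℂ}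
    (hf : ∀ i ∈ s, DifferentiableAt ℝ (f i) x) (v : E) :
    dirDeriv v (fun y => ∑ i ∈ s, f i y) x = ∑ i ∈ s, dirDeriv v (f i) x := by
  simp [dirDeriv, fderiv_fun_sum hf]

theorem dirDeriv_conj (f : E → ℂ) (v x : E) :
    dirDeriv v (fun y => conj (f y)) x = conj (dirDeriv v f x) := by
  show fderiv ℝ (fun y => star (f y)) x v = _
  rw [fderiv_star]
  rfl

theorem dirDeriv_comm (hf : ContDiffAt ℝ 2 f x) (v w : E) :
    dirDeriv v (dirDeriv w f) x = dirDeriv w (dirDeriv v f) x := by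
  have hdf : DifferentiableAt ℝ (fderiv ℝ f) x :=
    (hf.fderiv_right (m := 1) le_rfl).differentiableAt one_ne_zero
  have hsnd : ∀ v w, dirDeriv v (dirDeriv w f) x = fderiv ℝ (fderiv ℝ f) x v w := fun v w => by
    unfold dirDeriv
    rw [fderiv_clm_apply hdf (differentiableAt_const w)]
    simp
  rw [hsnd, hsnd, hf.isSymmSndFDerivAt (by simp) v w]

end DirDeriv

namespace KvH

def timeDir : ℝ × PS n := (1, 0)
def qDir (i : Fin n) : ℝ × PS n := (0, Pi.single i 1, 0)
def pDir (i : Fin n) : ℝ × PS n := (0, 0, Pi.single i 1)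

def mom (i : Fin n) : ℝ × PS n →L[ℝ] ℂ :=
  ofRealCLM.comp ((ContinuousLinearMap.proj i).comp
    ((ContinuousLinearMap.snd ℝ _ _).comp (ContinuousLinearMap.snd ℝ ℝ (PS n))))

theorem mom_apply (i : Fin n) (x : ℝ × PS n) : mom i x = x.2.2 i := rfl

theorem dirDeriv_mom (i : Fin n) (v x : ℝ × PS n) : dirDeriv v (mom i) x = v.2.2 i := by
  rw [dirDeriv, ContinuousLinearMap.fderiv]
  rfl

def bracket (F G : ℝ × PS n → ℂ) (x : ℝ × PS n) : ℂ :=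
  ∑ i, (dirDeriv (qDir i) F x * dirDeriv (pDir i) G x
    - dirDeriv (pDir i) F x * dirDeriv (qDir i) G x)

def euler (F : ℝ × PS n → ℂ) (x : ℝ × PS n) : ℂ :=
  ∑ i, mom i x * dirDeriv (pDir i) F x

section BracketAlgebra

variable {F G G' K : ℝ × PS n → ℂ} {x : ℝ × PS n}

theorem differentiable_bracket (hF : ContDiff ℝ 2 F) (hG : ContDiff ℝ 2 G) :
    Differentiable ℝ (bracket F G) :=
  Differentiable.fun_sum fun i _ =>
    ((hF.differentiable_dirDeriv (qDir i)).fun_mul (hG.differentiable_dirDeriv (pDir i))).fun_sub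
      ((hF.differentiable_dirDeriv (pDir i)).fun_mul (hG.differentiable_dirDeriv (qDir i)))

theorem bracket_antisymm (F G : ℝ × PS n → ℂ) (x : ℝ × PS n) :
    bracket F G x = -bracket G F x := by
  simp only [bracket, ← Finset.sum_neg_distrib]
  exact Finset.sum_congr rfl fun i _ => by ring

theorem bracket_add_right (hG : DifferentiableAt ℝ G x) (hG' : DifferentiableAt ℝ G' x) :
    bracket F (fun y => G y + G' y) x = bracket F G x + bracket F G' x := by
  simp only [bracket, dirDeriv_add hG hG', ← Finset.sum_add_distrib]
  exact Finset.sum_congr rfl fun i _ => by ring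

theorem bracket_sub_right (hG : DifferentiableAt ℝ G x) (hG' : DifferentiableAt ℝ G' x) :
    bracket F (fun y => G y - G' y) x = bracket F G x - bracket F G' x := by
  simp only [bracket, dirDeriv_sub hG hG', ← Finset.sum_sub_distrib]
  exact Finset.sum_congr rfl fun i _ => by ring

theorem bracket_const_mul_right (hG : DifferentiableAt ℝ G x) (c : ℂ) :
    bracket F (fun y => c * G y) x = c * bracket F G x := by
  simp only [bracket, dirDeriv_const_mul hG, Finset.mul_sum]
  exact Finset.sum_congr rfl fun i _ => by ring

theorem bracket_mul_right (hG : DifferentiableAt ℝ G x) (hG' : DifferentiableAt ℝ G' x) :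
    bracket F (fun y => G y * G' y) x = bracket F G x * G' x + G x * bracket F G' x := by
  simp only [bracket, dirDeriv_mul hG hG', Finset.sum_mul, Finset.mul_sum,
    ← Finset.sum_add_distrib]
  exact Finset.sum_congr rfl fun i _ => by ring

theorem bracket_sum_right {ι : Type*} {s : Finset ι} {G : ι → ℝ × PS n → ℂ}
    (hG : ∀ j ∈ s, DifferentiableAt ℝ (G j) x) :
    bracket F (fun y => ∑ j ∈ s, G j y) x = ∑ j ∈ s, bracket F (G j) x := by
  simp only [bracket, dirDeriv_sum hG, Finset.mul_sum, ← Finset.sum_sub_distrib]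
  exact Finset.sum_comm

theorem bracket_add_left (hG : DifferentiableAt ℝ G x) (hG' : DifferentiableAt ℝ G' x) :
    bracket (fun y => G y + G' y) F x = bracket G F x + bracket G' F x := by
  rw [bracket_antisymm, bracket_add_right hG hG', bracket_antisymm F, bracket_antisymm F]
  ring

theorem bracket_sub_left (hG : DifferentiableAt ℝ G x) (hG' : DifferentiableAt ℝ G' x) :
    bracket (fun y => G y - G' y) F x = bracket G F x - bracket G' F x := by
  rw [bracket_antisymm, bracket_sub_right hG hG', bracket_antisymm F, bracket_antisymm F]
  ring

theorem bracket_const_mul_left (hG : DifferentiableAt ℝ G x) (c : ℂ) :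
    bracket (fun y => c * G y) F x = c * bracket G F x := by
  rw [bracket_antisymm, bracket_const_mul_right hG, bracket_antisymm F]
  ring

theorem bracket_mul_left (hG : DifferentiableAt ℝ G x) (hG' : DifferentiableAt ℝ G' x) :
    bracket (fun y => G y * G' y) F x = G x * bracket G' F x + G' x * bracket G F x := by
  rw [bracket_antisymm, bracket_mul_right hG hG', bracket_antisymm F, bracket_antisymm F]
  ring

theorem bracket_sum_left {ι : Type*} {s : Finset ι} {G : ι → ℝ × PS n → ℂ}
    (hG : ∀ j ∈ s, DifferentiableAt ℝ (G j) x) :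
    bracket (fun y => ∑ j ∈ s, G j y) F x = ∑ j ∈ s, bracket (G j) F x := by
  rw [bracket_antisymm, bracket_sum_right hG, ← Finset.sum_neg_distrib]
  exact Finset.sum_congr rfl fun j _ => (bracket_antisymm _ _ _).symm

theorem bracket_mom_left (i : Fin n) (F : ℝ × PS n → ℂ) (x : ℝ × PS n) :
    bracket (mom i) F x = -dirDeriv (qDir i) F x := by
  simp [bracket, dirDeriv_mom, qDir, pDir, Pi.single_apply, apply_ite (fun r : ℝ => (r : ℂ)),
    ite_mul]

theorem conj_bracket (F G : ℝ × PS n → ℂ) (x : ℝ × PS n) :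
    conj (bracket F G x) = bracket (fun y => conj (F y)) (fun y => conj (G y)) x := by
  simp only [bracket, map_sum, map_sub, map_mul, dirDeriv_conj]

theorem dirDeriv_bracket (hF : ContDiff ℝ 2 F) (hG : ContDiff ℝ 2 G) (v : ℝ × PS n) :
    dirDeriv v (bracket F G) x = bracket (dirDeriv v F) G x + bracket F (dirDeriv v G) x := by
  have dF w := hF.differentiable_dirDeriv w x
  have dG w := hG.differentiable_dirDeriv w x
  unfold bracket
  rw [dirDeriv_sum fun i _ => ((dF _).fun_mul (dG _)).fun_sub ((dF _).fun_mul (dG _)),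
    ← Finset.sum_add_distrib]
  refine Finset.sum_congr rfl fun i _ => ?_
  rw [dirDeriv_sub ((dF _).fun_mul (dG _)) ((dF _).fun_mul (dG _)), dirDeriv_mul (dF _) (dG _),
    dirDeriv_mul (dF _) (dG _), dirDeriv_comm hF.contDiffAt v, dirDeriv_comm hF.contDiffAt v,
    dirDeriv_comm hG.contDiffAt v, dirDeriv_comm hG.contDiffAt v]
  ring

theorem bracket_jacobi (hK : ContDiff ℝ 2 K) (hF : ContDiff ℝ 2 F) (hG : ContDiff ℝ 2 G) :
    bracket K (bracket F G) x = bracket (bracket K F) G x + bracket F (bracket K G) x := by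
  rw [← sub_eq_zero]
  simp only [bracket, dirDeriv_bracket hK hF, dirDeriv_bracket hK hG, dirDeriv_bracket hF hG]
  simp only [Finset.mul_sum, Finset.sum_mul, ← Finset.sum_add_distrib, ← Finset.sum_sub_distrib]
  -- With mixed second derivatives put in a fixed order, the summand is antisymmetric in `(i, j)`.
  refine Finset.sum_sum_eq_zero_of_antisymm _ fun i j => ?_
  have comm {X : ℝ × PS n → ℂ} (hX : ContDiff ℝ 2 X) (d d' : Fin n → ℝ × PS n) :
      dirDeriv (d j) (dirDeriv (d' i) X) x = dirDeriv (d' i) (dirDeriv (d j) X) x :=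
    dirDeriv_comm hX.contDiffAt _ _
  simp only [comm hK qDir qDir, comm hK qDir pDir, comm hK pDir qDir, comm hK pDir pDir,
    comm hF qDir qDir, comm hF qDir pDir, comm hF pDir qDir, comm hF pDir pDir,
    comm hG qDir qDir, comm hG qDir pDir, comm hG pDir qDir, comm hG pDir pDir]
  ring

end BracketAlgebra

section Euler

variable {F G K : ℝ × PS n → ℂ} {x : ℝ × PS n}

theorem differentiable_euler (hF : ContDiff ℝ 2 F) : Differentiable ℝ (euler F) :=
  Differentiable.fun_sum fun i _ => (mom i).differentiable.fun_mul (hF.differentiable_dirDeriv _)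

theorem sum_dirDeriv_mom_mul (hF : DifferentiableAt ℝ F x) :
    ∑ i, dirDeriv (pDir i) (fun y => mom i y * F y) x = n * F x + euler F x := by
  simp only [dirDeriv_mul (mom _).differentiableAt hF, dirDeriv_mom, euler,
    Finset.sum_add_distrib]
  simp [pDir]

theorem conj_euler (F : ℝ × PS n → ℂ) (x : ℝ × PS n) :
    conj (euler F x) = euler (fun y => conj (F y)) x := by
  simp only [euler, map_sum, map_mul, dirDeriv_conj, mom_apply, conj_ofReal]

theorem dirDeriv_euler (hF : ContDiff ℝ 2 F) {v : ℝ × PS n} (hv : v.2.2 = 0) :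
    dirDeriv v (euler F) x = euler (dirDeriv v F) x := by
  have dF w := hF.differentiable_dirDeriv w x
  unfold euler
  rw [dirDeriv_sum fun i _ => (mom i).differentiableAt.fun_mul (dF _)]
  refine Finset.sum_congr rfl fun i _ => ?_
  rw [dirDeriv_mul (mom i).differentiableAt (dF _), dirDeriv_mom, hv,
    dirDeriv_comm hF.contDiffAt]
  simp

theorem euler_bracket (hK : ContDiff ℝ 2 K) (hG : ContDiff ℝ 2 G) :
    euler (bracket K G) x = bracket (fun y => euler K y - K y) G x + bracket K (euler G) x := by
  have dK w := hK.differentiable_dirDeriv w x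
  have dG w := hG.differentiable_dirDeriv w x
  rw [bracket_sub_left (differentiable_euler hK x) (hK.differentiable two_ne_zero x)]
  unfold euler
  rw [bracket_sum_left fun j _ => (mom j).differentiableAt.fun_mul (dK _),
    bracket_sum_right fun j _ => (mom j).differentiableAt.fun_mul (dG _)]
  simp only [bracket_mul_left (mom _).differentiableAt (dK _),
    bracket_mul_right (mom _).differentiableAt (dG _), bracket_mom_left,
    fun j => bracket_antisymm K (mom j) x, dirDeriv_bracket hK hG]
  rw [show bracket K G x = ∑ j, (dirDeriv (qDir j) K x * dirDeriv (pDir j) G x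
    - dirDeriv (pDir j) K x * dirDeriv (qDir j) G x) from rfl,
    ← Finset.sum_sub_distrib, ← Finset.sum_add_distrib]
  exact Finset.sum_congr rfl fun j _ => by ring

end Euler

def absSq (Ψ : ℝ × PS n → ℂ) (x : ℝ × PS n) : ℂ :=
  Ψ x * conj (Ψ x)

def density (ℏ : ℝ) (Ψ : ℝ × PS n → ℂ) (x : ℝ × PS n) : ℂ :=
  (n + 1) * absSq Ψ x + euler (absSq Ψ) x + I * ℏ * bracket Ψ (fun y => conj (Ψ y)) x

section Density

variable {Ψ : ℝ × PS n → ℂ} {x : ℝ × PS n} {ℏ : ℝ}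

theorem contDiff_absSq {m : WithTop ℕ∞} (hΨ : ContDiff ℝ m Ψ) : ContDiff ℝ m (absSq Ψ) :=
  hΨ.mul hΨ.conj

theorem conj_absSq (Ψ : ℝ × PS n → ℂ) (x : ℝ × PS n) : conj (absSq Ψ x) = absSq Ψ x := by
  simp [absSq, mul_comm]

theorem density_im (ℏ : ℝ) (Ψ : ℝ × PS n → ℂ) (x : ℝ × PS n) : (density ℏ Ψ x).im = 0 := by
  have hbr : conj (bracket Ψ (fun y => conj (Ψ y)) x) = -bracket Ψ (fun y => conj (Ψ y)) x := by
    rw [conj_bracket, bracket_antisymm]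
    simp only [conj_conj]
  rw [← conj_eq_iff_im, density]
  simp only [map_add, map_mul, map_natCast, map_one, conj_I, conj_ofReal, conj_euler,
    conj_absSq, hbr]
  ring

theorem differentiable_density (hΨ : ContDiff ℝ 2 Ψ) : Differentiable ℝ (density ℏ Ψ) :=
  ((((contDiff_absSq hΨ).differentiable two_ne_zero).const_mul _).fun_add
    (differentiable_euler (contDiff_absSq hΨ))).fun_add
    ((differentiable_bracket hΨ hΨ.conj).const_mul _)

theorem dirDeriv_density (hΨ : ContDiff ℝ 2 Ψ) (v : ℝ × PS n) :
    dirDeriv v (density ℏ Ψ) x = (n + 1) * dirDeriv v (absSq Ψ) x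
      + dirDeriv v (euler (absSq Ψ)) x
      + I * ℏ * dirDeriv v (bracket Ψ (fun y => conj (Ψ y))) x := by
  have dD := (contDiff_absSq hΨ).differentiable two_ne_zero x
  have dE := differentiable_euler (contDiff_absSq hΨ) x
  have dB := differentiable_bracket hΨ hΨ.conj x
  unfold density
  rw [dirDeriv_add ((dD.const_mul _).fun_add dE) (dB.const_mul _),
    dirDeriv_add (dD.const_mul _) dE, dirDeriv_const_mul dD, dirDeriv_const_mul dB]

theorem bracket_density {K : ℝ × PS n → ℂ} (hΨ : ContDiff ℝ 2 Ψ) :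
    bracket K (density ℏ Ψ) x = (n + 1) * bracket K (absSq Ψ) x
      + bracket K (euler (absSq Ψ)) x
      + I * ℏ * bracket K (bracket Ψ (fun y => conj (Ψ y))) x := by
  conv_lhs => rw [bracket]
  simp only [dirDeriv_density hΨ, bracket, Finset.mul_sum, ← Finset.sum_add_distrib]
  exact Finset.sum_congr rfl fun i _ => by ring

end Density

section Evolution

variable {K V Ψ : ℝ × PS n → ℂ} {v x : ℝ × PS n}

theorem dirDeriv_conj_of_evolution (hKreal : ∀ y, conj (K y) = K y)
    (hVreal : ∀ y, conj (V y) = V y)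
    (hevol : ∀ y, dirDeriv v Ψ y = bracket K Ψ y + I * (V y * Ψ y)) (y : ℝ × PS n) :
    dirDeriv v (fun y => conj (Ψ y)) y
      = bracket K (fun y => conj (Ψ y)) y - I * (V y * conj (Ψ y)) := by
  rw [dirDeriv_conj, hevol, map_add, conj_bracket, funext hKreal]
  simp only [map_mul, conj_I, hVreal]
  ring

theorem dirDeriv_absSq_of_evolution (hKreal : ∀ y, conj (K y) = K y)
    (hVreal : ∀ y, conj (V y) = V y) (hΨ : Differentiable ℝ Ψ)
    (hevol : ∀ y, dirDeriv v Ψ y = bracket K Ψ y + I * (V y * Ψ y)) (y : ℝ × PS n) :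
    dirDeriv v (absSq Ψ) y = bracket K (absSq Ψ) y := by
  have dΨc : DifferentiableAt ℝ (fun y => conj (Ψ y)) y := (hΨ y).star
  unfold absSq
  rw [dirDeriv_mul (hΨ y) dΨc, bracket_mul_right (hΨ y) dΨc, hevol,
    dirDeriv_conj_of_evolution hKreal hVreal hevol]
  ring

theorem dirDeriv_bracket_conj_of_evolution (hK : ContDiff ℝ 2 K)
    (hKreal : ∀ y, conj (K y) = K y) (hV : DifferentiableAt ℝ V x)
    (hVreal : ∀ y, conj (V y) = V y) (hΨ : ContDiff ℝ 2 Ψ)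
    (hevol : ∀ y, dirDeriv v Ψ y = bracket K Ψ y + I * (V y * Ψ y)) :
    dirDeriv v (bracket Ψ (fun y => conj (Ψ y))) x
      = bracket K (bracket Ψ (fun y => conj (Ψ y))) x + I * bracket V (absSq Ψ) x := by
  have dΨ := hΨ.differentiable two_ne_zero x
  have dΨc := hΨ.conj.differentiable two_ne_zero x
  rw [dirDeriv_bracket hΨ hΨ.conj, funext hevol,
    funext (dirDeriv_conj_of_evolution hKreal hVreal hevol),
    bracket_add_left (differentiable_bracket hK hΨ x) ((hV.fun_mul dΨ).const_mul I),
    bracket_sub_right (differentiable_bracket hK hΨ.conj x) ((hV.fun_mul dΨc).const_mul I),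
    bracket_const_mul_left (hV.fun_mul dΨ), bracket_const_mul_right (hV.fun_mul dΨc),
    bracket_mul_left hV dΨ, bracket_mul_right hV dΨc, bracket_jacobi hK hΨ hΨ.conj]
  unfold absSq
  rw [bracket_mul_right dΨ dΨc, bracket_antisymm Ψ V]
  ring

end Evolution

theorem dirDeriv_timeDir_density_of_kvh {K Ψ : ℝ × PS n → ℂ} {x : ℝ × PS n} {ℏ : ℝ}
    (hℏ : ℏ ≠ 0) (hK : ContDiff ℝ 2 K) (hKreal : ∀ y, conj (K y) = K y) (hΨ : ContDiff ℝ 2 Ψ)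
    (hkvh : ∀ y, I * ℏ * dirDeriv timeDir Ψ y
      = I * ℏ * bracket K Ψ y - (euler K y - K y) * Ψ y) :
    dirDeriv timeDir (density ℏ Ψ) x = bracket K (density ℏ Ψ) x := by
  set L : ℝ × PS n → ℂ := fun y => euler K y - K y
  have dL : Differentiable ℝ L := (differentiable_euler hK).fun_sub (hK.differentiable two_ne_zero)
  have hVreal y : conj ((ℏ : ℂ)⁻¹ * L y) = (ℏ : ℂ)⁻¹ * L y := by
    simp only [L, map_mul, map_sub, map_inv₀, conj_ofReal, conj_euler, hKreal]
  have hIℏ : I * ℏ * (I * (ℏ : ℂ)⁻¹) = -1 := by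
    rw [mul_mul_mul_comm, I_mul_I, mul_inv_cancel₀ (ofReal_ne_zero.mpr hℏ), mul_one]
  have hevol y : dirDeriv timeDir Ψ y = bracket K Ψ y + I * ((ℏ : ℂ)⁻¹ * L y * Ψ y) := by
    refine mul_left_cancel₀ (mul_ne_zero I_ne_zero (ofReal_ne_zero.mpr hℏ)) ?_
    rw [hkvh y]
    linear_combination (-L y * Ψ y) * hIℏ
  have hD := contDiff_absSq hΨ
  have hDt : dirDeriv timeDir (absSq Ψ) = bracket K (absSq Ψ) :=
    funext (dirDeriv_absSq_of_evolution hKreal hVreal (hΨ.differentiable two_ne_zero) hevol)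
  rw [dirDeriv_density hΨ, bracket_density hΨ, hDt, dirDeriv_euler hD rfl, hDt,
    euler_bracket hK hD, dirDeriv_bracket_conj_of_evolution hK hKreal ((dL x).const_mul _)
      hVreal hΨ hevol, bracket_const_mul_left (dL x)]
  linear_combination bracket L (absSq Ψ) x * hIℏ

section Slice

variable {f F G : ℝ × PS n → ℂ} {t : ℝ} {z : PS n}

theorem deriv_slice (hf : DifferentiableAt ℝ f (t, z)) :
    deriv (fun s => f (s, z)) t = dirDeriv timeDir f (t, z) :=
  (hf.hasFDerivAt.comp_hasDerivAt t ((hasDerivAt_id t).prodMk (hasDerivAt_const t z))).deriv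

theorem fderiv_slice (hf : DifferentiableAt ℝ f (t, z)) (w : PS n) :
    fderiv ℝ (fun w => f (t, w)) z w = dirDeriv (0, w) f (t, z) := by
  have h : HasFDerivAt (fun w => f (t, w))
      ((fderiv ℝ f (t, z)).comp ((0 : PS n →L[ℝ] ℝ).prod (ContinuousLinearMap.id ℝ (PS n)))) z :=
    hf.hasFDerivAt.comp z ((hasFDerivAt_const t z).prodMk (hasFDerivAt_id z))
  rw [h.fderiv]
  rfl

theorem pb_slice (hF : DifferentiableAt ℝ F (t, z)) (hG : DifferentiableAt ℝ G (t, z)) :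
    pb (fun w => F (t, w)) (fun w => G (t, w)) z = bracket F G (t, z) := by
  simp only [pb, dq, dp, fderiv_slice hF, fderiv_slice hG]
  rfl

theorem dp_ofReal {H : PS n → ℝ} (hH : DifferentiableAt ℝ H z) (i : Fin n) :
    dp i (fun w => (H w : ℂ)) z = dpR i H z := by
  have h : HasFDerivAt (fun w => (H w : ℂ)) (ofRealCLM.comp (fderiv ℝ H z)) z :=
    ofRealCLM.hasFDerivAt.comp z hH.hasFDerivAt
  rw [dp, h.fderiv]
  rfl

theorem euler_ofReal_snd {H : PS n → ℝ} (hH : DifferentiableAt ℝ H z) :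
    euler (fun x => (H x.2 : ℂ)) (t, z) = ((∑ i, z.2 i * dpR i H z : ℝ) : ℂ) := by
  have hK : DifferentiableAt ℝ (fun x : ℝ × PS n => (H x.2 : ℂ)) (t, z) :=
    ofRealCLM.differentiableAt.comp _ (hH.comp _ differentiableAt_snd)
  push_cast
  refine Finset.sum_congr rfl fun i _ => ?_
  rw [mom_apply, ← dp_ofReal hH, dp, fderiv_slice hK]
  rfl

theorem rhoKvH_slice {Ψ : ℝ × PS n → ℂ} (hΨ : Differentiable ℝ Ψ) (ℏ : ℝ) (t : ℝ) (z : PS n) :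
    rhoKvH ℏ (fun w => Ψ (t, w)) z = density ℏ Ψ (t, z) := by
  have dD : Differentiable ℝ (absSq Ψ) := hΨ.fun_mul hΨ.star
  have hnormSq y : (normSq (Ψ y) : ℂ) = absSq Ψ y := (mul_conj _).symm
  have hsum i : dp i (fun w => (w.2 i : ℂ) * normSq (Ψ (t, w))) z
      = dirDeriv (pDir i) (fun y => mom i y * absSq Ψ y) (t, z) := by
    simp only [hnormSq]
    exact fderiv_slice ((mom i).differentiableAt.fun_mul (dD _)) _
  rw [rhoKvH, hnormSq, Finset.sum_congr rfl fun i _ => hsum i, sum_dirDeriv_mom_mul (dD _),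
    pb_slice (G := fun y => conj (Ψ y)) (hΨ _) (hΨ _).star, density]
  ring

end Slice

end KvH

open KvH

/-- If `Ψ` solves the Koopman–van Hove equation, then the
momentum map `ρ := |Ψ|² + Σᵢ ∂_{pᵢ}(pᵢ|Ψ|²) + iℏ{Ψ, conj Ψ}` is real-valued
and solves the classical Liouville equation `∂ₜρ = {H, ρ}`. -/
theorem kvh_density_liouville (n : ℕ) (ℏ : ℝ) (hℏ : 0 < ℏ)
    (H : PS n → ℝ) (hH : ContDiff ℝ (⊤ : ℕ∞) H)
    (Ψ : ℝ × PS n → ℂ) (hΨ : ContDiff ℝ (⊤ : ℕ∞) Ψ)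
    (hKvH : ∀ (t : ℝ) (z : PS n),
      Complex.I * ℏ * deriv (fun s => Ψ (s, z)) t
        = Complex.I * ℏ * pb (fun w => (H w : ℂ)) (fun w => Ψ (t, w)) z
          - (((∑ i, z.2 i * dpR i H z) - H z : ℝ) : ℂ) * Ψ (t, z)) :
    ∀ (t : ℝ) (z : PS n),
      (rhoKvH ℏ (fun w => Ψ (t, w)) z).im = 0
        ∧ deriv (fun s => rhoKvH ℏ (fun w => Ψ (s, w)) z) t
            = pb (fun w => (H w : ℂ)) (fun w => rhoKvH ℏ (fun w' => Ψ (t, w')) w) z := by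
  have hΨ2 : ContDiff ℝ 2 Ψ := hΨ.of_le (WithTop.coe_le_coe.mpr le_top)
  have hK : ContDiff ℝ 2 (fun x : ℝ × PS n => (H x.2 : ℂ)) :=
    ofRealCLM.contDiff.comp ((hH.of_le (WithTop.coe_le_coe.mpr le_top)).comp contDiff_snd)
  have dΨ := hΨ2.differentiable two_ne_zero
  have dK := hK.differentiable two_ne_zero
  have dρ := differentiable_density (ℏ := ℏ) hΨ2
  have hρ s w : rhoKvH ℏ (fun w' => Ψ (s, w')) w = density ℏ Ψ (s, w) := rhoKvH_slice dΨ ℏ s w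
  have hkvh : ∀ y, I * ℏ * dirDeriv timeDir Ψ y = I * ℏ * bracket (fun x => (H x.2 : ℂ)) Ψ y
      - (euler (fun x => (H x.2 : ℂ)) y - H y.2) * Ψ y := by
    rintro ⟨s, w⟩
    rw [← deriv_slice (dΨ _), hKvH, pb_slice (dK _) (dΨ _),
      euler_ofReal_snd ((hH.differentiable (by simp)) w)]
    push_cast
    ring
  intro t z
  refine ⟨hρ t z ▸ density_im ℏ Ψ (t, z), ?_⟩
  simp only [hρ]
  rw [deriv_slice (dρ _), pb_slice (dK _) (dρ _)]
  exact dirDeriv_timeDir_density_of_kvh hℏ.ne' hK (fun y => conj_ofReal _) hΨ2 hkvh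
end
end

section
/- Remarkable algebraic relation for hybrid Liouvillians (finite-dimensional quantum sector, componentwise form): let Â, B̂ : ℝ²ⁿ → Mₖ(ℂ) be smooth with Â(z), B̂(z) Hermitian for every z, and let Ā, B̄ denote their entrywise complex conjugates. Then for every smooth ψ : ℝ²ⁿ → ℂ and all indices a, b ∈ {1,…,k}: ([L̂_Â, L̂_B̂](ψ e_b))_a + ([L̂_Ā, L̂_B̄](ψ e_a))_b = iħ (L̂_{{Â,B̂} − {B̂,Â}}(ψ e_b))_a, where [L̂_Â, L̂_B̂] := L̂_Â ∘ L̂_B̂ − L̂_B̂ ∘ L̂_Â, e_a is the a-th standard basis vector of ℂᵏ, and {Â,B̂} := Σᵢ (∂_{qⁱ}Â · ∂_{pᵢ}B̂ − ∂_{pᵢ}Â · ∂_{qⁱ}B̂) with matrix products. -/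
/-!
Componentwise, `L̂_Â (ψ e_b)` has entries `L_{A_{ab}} ψ`, where for a scalar `f` the Liouvillian is
`L_f ψ = iℏ {f, ψ} + (f - Σ pᵢ ∂f/∂pᵢ) ψ`, and Hermiticity turns `Ā` into `Aᵀ`. Summing over the
intermediate index, the relation reduces to the scalar identity `[L_f, L_g] = iℏ L_{{f,g}}`, which
follows from the Jacobi identity and from `{f, M g} - {g, M f} = M {f, g}` for
`M f = f - Σ pᵢ ∂f/∂pᵢ`. Both only use that `∂/∂qⁱ`, `∂/∂pᵢ` are commuting derivations of the
algebra of smooth functions with `∂pⱼ/∂qⁱ = 0` and `∂pⱼ/∂pᵢ = δᵢⱼ`; they hold in any commutative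
algebra with such derivations.
-/

open Complex

noncomputable section

variable {n : ℕ}

variable {k : ℕ}

/-- The hybrid Liouvillian `L̂_Â` for an `Mₖ(ℂ)`-valued observable `A` (encoded
componentwise), acting on `ℂᵏ`-valued wavefunctions:
`L̂_Â Υ := iℏ Σᵢ (∂_{qⁱ}Â ∂_{pᵢ}Υ − ∂_{pᵢ}Â ∂_{qⁱ}Υ) + (Â − Σᵢ pᵢ ∂_{pᵢ}Â) Υ`. -/
noncomputable def LHyb (ℏ : ℝ) (A : PS n → Fin k → Fin k → ℂ)
    (Υ : PS n → Fin k → ℂ) (z : PS n) (a : Fin k) : ℂ :=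
  Complex.I * ℏ * ∑ i, ∑ b, (dq i (fun w => A w a b) z * dp i (fun w => Υ w b) z
      - dp i (fun w => A w a b) z * dq i (fun w => Υ w b) z)
    + ∑ b, (A z a b - ∑ i, (z.2 i : ℂ) * dp i (fun w => A w a b) z) * Υ z b

/-- Matrix-valued canonical Poisson bracket
`{A,B} := Σᵢ (∂_{qⁱ}A · ∂_{pᵢ}B − ∂_{pᵢ}A · ∂_{qⁱ}B)` with matrix products. -/
noncomputable def mpb (A B : PS n → Fin k → Fin k → ℂ) (z : PS n) (a b : Fin k) : ℂ :=
  ∑ i, ∑ c, (dq i (fun w => A w a c) z * dp i (fun w => B w c b) z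
    - dp i (fun w => A w a c) z * dq i (fun w => B w c b) z)

namespace CommutingDerivations

variable {S R ι κ : Type*} [CommRing S] [CommRing R] [Algebra S R] [Fintype ι]

/-- `ham D q p f` is the Hamiltonian vector field of `f`, so `ham D q p f g` is the Poisson
bracket `{f, g}` for the frame of derivations `D (q i)`, `D (p i)`. -/
def ham (D : κ → Derivation S R R) (q p : ι → κ) (f : R) : Derivation S R R :=
  ∑ i, (D (q i) f • D (p i) - D (p i) f • D (q i))

variable {D : κ → Derivation S R R} {q p : ι → κ}

theorem ham_apply (f g : R) :
    ham D q p f g = ∑ i, (D (q i) f * D (p i) g - D (p i) f * D (q i) g) := by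
  rw [ham, ← Derivation.coeFnAddMonoidHom_apply, map_sum, Finset.sum_apply]
  rfl

theorem ham_antisymm (f g : R) : ham D q p f g = -ham D q p g f := by
  simp only [ham_apply, ← Finset.sum_neg_distrib]
  exact Finset.sum_congr rfl fun i _ => by ring

theorem ham_add (f g : R) : ham D q p (f + g) = ham D q p f + ham D q p g := by
  simp only [ham, map_add, add_smul, ← Finset.sum_add_distrib]
  exact Finset.sum_congr rfl fun i _ => by abel

theorem map_ham (hD : ∀ a b x, D a (D b x) = D b (D a x)) (w : κ) (f g : R) :
    D w (ham D q p f g) = ham D q p (D w f) g + ham D q p f (D w g) := by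
  simp only [ham_apply, map_sum, Derivation.map_sub, Derivation.leibniz, smul_eq_mul,
    ← Finset.sum_add_distrib]
  refine Finset.sum_congr rfl fun i _ => ?_
  rw [hD w (q i) f, hD w (p i) f, hD w (q i) g, hD w (p i) g]
  ring

theorem ham_jacobi (hD : ∀ a b x, D a (D b x) = D b (D a x)) (f g h : R) :
    ham D q p f (ham D q p g h) - ham D q p g (ham D q p f h) = ham D q p (ham D q p f g) h := by
  -- `ham f (ham g h)` is a part of first order in `h`, handled by `map_ham`, plus a part `Q f g`
  -- of second order in `h`, which is symmetric in `f` and `g` because the derivations commute.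
  set Q := fun f g => ∑ i,
    (D (q i) g * ham D q p f (D (p i) h) - D (p i) g * ham D q p f (D (q i) h)) with hQ
  have split : ∀ f g, ham D q p f (ham D q p g h) =
      ∑ i, (ham D q p f (D (q i) g) * D (p i) h - ham D q p f (D (p i) g) * D (q i) h) +
        Q f g := by
    intro f g
    simp only [hQ, ham_apply g h, map_sum, Derivation.map_sub, Derivation.leibniz, smul_eq_mul,
      ← Finset.sum_add_distrib]
    exact Finset.sum_congr rfl fun i _ => by ring
  have symm : Q f g = Q g f := by
    simp only [hQ, ham_apply, Finset.mul_sum, ← Finset.sum_sub_distrib]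
    rw [Finset.sum_comm]
    refine Finset.sum_congr rfl fun i _ => Finset.sum_congr rfl fun j _ => ?_
    rw [hD (p j) (p i) h, hD (q j) (p i) h, hD (p j) (q i) h, hD (q j) (q i) h]
    ring
  rw [split, split, symm, ham_apply (ham D q p f g) h]
  simp only [map_ham hD, ham_antisymm (D _ f) g]
  rw [add_sub_add_right_eq_sub, ← Finset.sum_sub_distrib]
  exact Finset.sum_congr rfl fun i _ => by ring

section Liouvillian

variable {P : ι → R}

def eulerDefect (D : κ → Derivation S R R) (p : ι → κ) (P : ι → R) (f : R) : R :=
  f - ∑ i, P i * D (p i) f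

theorem eulerDefect_add (f g : R) :
    eulerDefect D p P (f + g) = eulerDefect D p P f + eulerDefect D p P g := by
  simp only [eulerDefect, map_add, mul_add, Finset.sum_add_distrib]
  ring

/-- With `c = iℏ` this is the scalar hybrid Liouvillian `iℏ {f, ψ} + (f - Σ pᵢ ∂f/∂pᵢ) ψ`. -/
def liouvillian (D : κ → Derivation S R R) (q p : ι → κ) (P : ι → R) (c : S) (f ψ : R) : R :=
  c • ham D q p f ψ + eulerDefect D p P f * ψ

theorem liouvillian_add_left (c : S) (f g ψ : R) :
    liouvillian D q p P c (f + g) ψ = liouvillian D q p P c f ψ + liouvillian D q p P c g ψ := by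
  simp only [liouvillian, ham_add, eulerDefect_add, Derivation.add_apply, smul_add]
  ring

theorem liouvillian_sum_left {m : Type*} (s : Finset m) (c : S) (F : m → R) (ψ : R) :
    liouvillian D q p P c (∑ a ∈ s, F a) ψ = ∑ a ∈ s, liouvillian D q p P c (F a) ψ :=
  map_sum (AddMonoidHom.mk' (liouvillian D q p P c · ψ) (liouvillian_add_left c · · ψ)) F s

variable [DecidableEq ι]

theorem ham_apply_coord (hPq : ∀ i j, D (q i) (P j) = 0)
    (hPp : ∀ i j, D (p i) (P j) = if i = j then 1 else 0) (f : R) (j : ι) :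
    ham D q p f (P j) = D (q j) f := by
  simp [ham_apply, hPq, hPp]

theorem ham_eulerDefect (hD : ∀ a b x, D a (D b x) = D b (D a x))
    (hPq : ∀ i j, D (q i) (P j) = 0) (hPp : ∀ i j, D (p i) (P j) = if i = j then 1 else 0)
    (f g : R) :
    ham D q p f (eulerDefect D p P g) - ham D q p g (eulerDefect D p P f) =
      eulerDefect D p P (ham D q p f g) := by
  simp only [eulerDefect, Derivation.map_sub, map_sum, Derivation.leibniz, smul_eq_mul,
    ham_apply_coord hPq hPp, map_ham hD]
  simp only [ham_antisymm g]
  have sums : ∑ j, (P j * ham D q p f (D (p j) g) + D (p j) g * D (q j) f)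
      - ∑ j, (P j * -ham D q p (D (p j) f) g + D (p j) f * D (q j) g)
      = ham D q p f g + ∑ j, P j * (ham D q p (D (p j) f) g + ham D q p f (D (p j) g)) := by
    rw [ham_apply, ← Finset.sum_sub_distrib, ← Finset.sum_add_distrib]
    exact Finset.sum_congr rfl fun j _ => by ring
  linear_combination -sums

theorem liouvillian_commutator (hD : ∀ a b x, D a (D b x) = D b (D a x))
    (hPq : ∀ i j, D (q i) (P j) = 0) (hPp : ∀ i j, D (p i) (P j) = if i = j then 1 else 0)
    (c : S) (f g ψ : R) :
    liouvillian D q p P c f (liouvillian D q p P c g ψ)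
        - liouvillian D q p P c g (liouvillian D q p P c f ψ)
      = c • liouvillian D q p P c (ham D q p f g) ψ := by
  simp only [liouvillian, map_add, Derivation.leibniz, smul_eq_mul, Algebra.smul_def,
    Derivation.map_algebraMap]
  linear_combination (algebraMap S R c) ^ 2 * ham_jacobi (q := q) (p := p) hD f g ψ
    + algebraMap S R c * ψ * ham_eulerDefect hD hPq hPp f g

end Liouvillian

section Matrix

open scoped Matrix

variable {P : ι → R} {m : Type*} [Fintype m] [DecidableEq m]

def matrixLiouvillian (D : κ → Derivation S R R) (q p : ι → κ) (P : ι → R) (c : S)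
    (A : Matrix m m R) (Υ : m → R) (a : m) : R :=
  ∑ b, liouvillian D q p P c (A a b) (Υ b)

def matrixBracket (D : κ → Derivation S R R) (q p : ι → κ) (A B : Matrix m m R) :
    Matrix m m R :=
  Matrix.of fun a b => ∑ c, ham D q p (A a c) (B c b)

theorem matrixLiouvillian_single (c : S) (A : Matrix m m R) (s : R) (b : m) :
    matrixLiouvillian D q p P c A (Pi.single b s) = fun a => liouvillian D q p P c (A a b) s := by
  ext a
  rw [matrixLiouvillian, Finset.sum_eq_single b (fun d _ hd => ?_) (by simp)]
  · rw [Pi.single_eq_same]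
  · simp [Pi.single_eq_of_ne hd, liouvillian]

theorem matrixLiouvillian_remarkable_relation [DecidableEq ι]
    (hD : ∀ a b x, D a (D b x) = D b (D a x)) (hPq : ∀ i j, D (q i) (P j) = 0)
    (hPp : ∀ i j, D (p i) (P j) = if i = j then 1 else 0)
    (c : S) (A B : Matrix m m R) (s : R) (a b : m) :
    (matrixLiouvillian D q p P c A (matrixLiouvillian D q p P c B (Pi.single b s)) a
          - matrixLiouvillian D q p P c B (matrixLiouvillian D q p P c A (Pi.single b s)) a)
        + (matrixLiouvillian D q p P c Aᵀ (matrixLiouvillian D q p P c Bᵀ (Pi.single a s)) b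
          - matrixLiouvillian D q p P c Bᵀ (matrixLiouvillian D q p P c Aᵀ (Pi.single a s)) b)
      = c • matrixLiouvillian D q p P c (matrixBracket D q p A B - matrixBracket D q p B A)
          (Pi.single b s) a := by
  have bracket_sub : ∀ a b, (matrixBracket D q p A B - matrixBracket D q p B A) a b
      = ∑ d, (ham D q p (A a d) (B d b) + ham D q p (A d b) (B a d)) := by
    intro a b
    simp only [matrixBracket, Matrix.sub_apply, Matrix.of_apply, ← Finset.sum_sub_distrib]
    exact Finset.sum_congr rfl fun d _ => by rw [ham_antisymm (B a d)]; ring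
  simp only [matrixLiouvillian_single, bracket_sub, liouvillian_sum_left, liouvillian_add_left]
  simp only [matrixLiouvillian, Matrix.transpose_apply, Finset.smul_sum,
    ← Finset.sum_sub_distrib, ← Finset.sum_add_distrib, smul_add]
  refine Finset.sum_congr rfl fun d _ => ?_
  linear_combination liouvillian_commutator hD hPq hPp c (A a d) (B d b) s
    + liouvillian_commutator hD hPq hPp c (A d b) (B a d) s

end Matrix

end CommutingDerivations

theorem fderiv_fderiv_apply_comm_s9 {E F : Type*} [NormedAddCommGroup E] [NormedSpace ℝ E]
    [NormedAddCommGroup F] [NormedSpace ℝ F] {f : E → F} {z : E} (hf : ContDiffAt ℝ 2 f z)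
    (v w : E) :
    fderiv ℝ (fun y => fderiv ℝ f y w) z v = fderiv ℝ (fun y => fderiv ℝ f y v) z w := by
  have hdiff : DifferentiableAt ℝ (fderiv ℝ f) z :=
    (hf.fderiv_right (m := 1) le_rfl).differentiableAt one_ne_zero
  rw [fderiv_clm_apply hdiff (differentiableAt_const w),
    fderiv_clm_apply hdiff (differentiableAt_const v)]
  simpa using (hf.isSymmSndFDerivAt (by simp)).eq v w

namespace PhaseSpace

open CommutingDerivations

def smoothSubalgebra (n : ℕ) : Subalgebra ℂ (PS n → ℂ) where
  carrier := {f | ContDiff ℝ (⊤ : ℕ∞) f}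
  mul_mem' hf hg := Set.mem_ofPred.2 ((Set.mem_ofPred.1 hf).mul (Set.mem_ofPred.1 hg))
  add_mem' hf hg := Set.mem_ofPred.2 ((Set.mem_ofPred.1 hf).add (Set.mem_ofPred.1 hg))
  algebraMap_mem' _ := Set.mem_ofPred.2 contDiff_const

/-- A type synonym exposing only the `CommRing` and `Algebra ℂ` structures: with the many instance
paths of the subalgebra itself, unifying the general lemmas with their phase-space instances is
very slow. -/
def SmoothFunction (n : ℕ) : Type := smoothSubalgebra n

namespace SmoothFunction

instance : CommRing (SmoothFunction n) := inferInstanceAs (CommRing (smoothSubalgebra n))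

instance : Algebra ℂ (SmoothFunction n) := inferInstanceAs (Algebra ℂ (smoothSubalgebra n))

def mk (f : PS n → ℂ) (hf : ContDiff ℝ (⊤ : ℕ∞) f) : SmoothFunction n := ⟨f, hf⟩

def eval (z : PS n) : SmoothFunction n →ₐ[ℂ] ℂ :=
  (Pi.evalAlgHom ℂ (fun _ => ℂ) z).comp (smoothSubalgebra n).val

theorem contDiff (f : SmoothFunction n) : ContDiff ℝ (⊤ : ℕ∞) fun z => eval z f :=
  f.2

@[ext]
theorem ext {f g : SmoothFunction n} (h : ∀ z, eval z f = eval z g) : f = g :=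
  Subtype.ext (funext h)

theorem eval_mk (f : PS n → ℂ) (hf : ContDiff ℝ (⊤ : ℕ∞) f) (z : PS n) :
    eval z (mk f hf) = f z :=
  rfl

theorem differentiableAt (f : SmoothFunction n) (z : PS n) :
    DifferentiableAt ℝ (fun w => eval w f) z :=
  f.contDiff.differentiable (by simp) z

end SmoothFunction

open SmoothFunction

def dirDeriv (v : PS n) : Derivation ℂ (SmoothFunction n) (SmoothFunction n) :=
  Derivation.mk'
    { toFun := fun f => mk (fun z => fderiv ℝ (fun w => eval w f) z v)
        ((f.contDiff.fderiv_right (m := (⊤ : ℕ∞)) (by exact_mod_cast le_top)).clm_apply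
          contDiff_const)
      map_add' := fun f g => SmoothFunction.ext fun z => by
        simp [eval_mk, fderiv_fun_add (differentiableAt f z) (differentiableAt g z)]
      map_smul' := fun c f => SmoothFunction.ext fun z => by
        simp [eval_mk, fderiv_const_mul (differentiableAt f z)] }
    fun f g => SmoothFunction.ext fun z => by
      simp [eval_mk, fderiv_fun_mul (differentiableAt f z) (differentiableAt g z)]

theorem eval_dirDeriv (v : PS n) (f : SmoothFunction n) (z : PS n) :
    eval z (dirDeriv v f) = fderiv ℝ (fun w => eval w f) z v :=
  rfl

theorem dirDeriv_comm (v w : PS n) (f : SmoothFunction n) :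
    dirDeriv v (dirDeriv w f) = dirDeriv w (dirDeriv v f) :=
  SmoothFunction.ext fun _ =>
    fderiv_fderiv_apply_comm_s9 (f.contDiff.contDiffAt.of_le (WithTop.coe_le_coe.2 le_top)) v w

def qDir (i : Fin n) : PS n := (Pi.single i 1, 0)

def pDir (i : Fin n) : PS n := (0, Pi.single i 1)

def momentum (j : Fin n) : SmoothFunction n :=
  mk (fun z => (z.2 j : ℂ)) (ofRealCLM.contDiff.comp ((contDiff_apply ℝ ℝ j).comp contDiff_snd))

theorem dirDeriv_momentum (v : PS n) (j : Fin n) :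
    dirDeriv v (momentum j) = algebraMap ℂ _ (v.2 j : ℂ) := by
  have hlin : (fun z : PS n => (z.2 j : ℂ)) =
      ofRealCLM.comp ((ContinuousLinearMap.proj j).comp (ContinuousLinearMap.snd ℝ _ _)) := rfl
  ext z
  rw [eval_dirDeriv, AlgHom.commutes]
  change fderiv ℝ (fun z : PS n => (z.2 j : ℂ)) z v = _
  rw [hlin, ContinuousLinearMap.fderiv]
  rfl

theorem dirDeriv_qDir_momentum (i j : Fin n) : dirDeriv (qDir i) (momentum j) = 0 := by
  simp [dirDeriv_momentum, qDir]

theorem dirDeriv_pDir_momentum (i j : Fin n) :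
    dirDeriv (pDir i) (momentum j) = if i = j then 1 else 0 := by
  rw [dirDeriv_momentum, pDir]
  by_cases h : i = j
  · subst h
    simp
  · simp [h]

theorem eval_dirDeriv_qDir (i : Fin n) (f : SmoothFunction n) (z : PS n) :
    eval z (dirDeriv (qDir i) f) = dq i (fun w => eval w f) z :=
  rfl

theorem eval_dirDeriv_pDir (i : Fin n) (f : SmoothFunction n) (z : PS n) :
    eval z (dirDeriv (pDir i) f) = dp i (fun w => eval w f) z :=
  rfl

theorem eval_momentum (j : Fin n) (z : PS n) : eval z (momentum j) = z.2 j :=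
  rfl

theorem LHyb_eval (ℏ : ℝ) (A : Matrix (Fin k) (Fin k) (SmoothFunction n))
    (Υ : Fin k → SmoothFunction n) :
    LHyb ℏ (fun z a b => eval z (A a b)) (fun z a => eval z (Υ a)) =
      fun z a => eval z (matrixLiouvillian dirDeriv qDir pDir momentum (I * ℏ) A Υ a) := by
  funext z a
  rw [LHyb, Finset.sum_comm, Finset.mul_sum, ← Finset.sum_add_distrib, matrixLiouvillian, map_sum]
  refine Finset.sum_congr rfl fun c _ => ?_
  simp only [liouvillian, ham_apply, eulerDefect, map_add, map_smul, map_mul, map_sub, map_sum,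
    smul_eq_mul, eval_dirDeriv_qDir, eval_dirDeriv_pDir, eval_momentum, Finset.sum_sub_distrib]

theorem mpb_eval (A B : Matrix (Fin k) (Fin k) (SmoothFunction n)) (z : PS n) (a b : Fin k) :
    mpb (fun z a b => eval z (A a b)) (fun z a b => eval z (B a b)) z a b =
      eval z (matrixBracket dirDeriv qDir pDir A B a b) := by
  rw [mpb, Finset.sum_comm, matrixBracket, Matrix.of_apply, map_sum]
  refine Finset.sum_congr rfl fun c _ => ?_
  simp only [ham_apply, map_mul, map_sub, map_sum, eval_dirDeriv_qDir, eval_dirDeriv_pDir,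
    Finset.sum_sub_distrib]

theorem mpb_sub_mpb_eval (A B : Matrix (Fin k) (Fin k) (SmoothFunction n)) :
    (fun z a b => mpb (fun z a b => eval z (A a b)) (fun z a b => eval z (B a b)) z a b
        - mpb (fun z a b => eval z (B a b)) (fun z a b => eval z (A a b)) z a b) =
      fun z a b => eval z
        ((matrixBracket dirDeriv qDir pDir A B - matrixBracket dirDeriv qDir pDir B A) a b) := by
  funext z a b
  simp [mpb_eval]

theorem exists_matrix_smoothFunction {A : PS n → Fin k → Fin k → ℂ}
    (hA : ContDiff ℝ (⊤ : ℕ∞) A) :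
    ∃ Â : Matrix (Fin k) (Fin k) (SmoothFunction n), A = fun z a b => eval z (Â a b) :=
  ⟨Matrix.of fun a b => mk (fun z => A z a b) (contDiff_pi.1 (contDiff_pi.1 hA a) b), rfl⟩

theorem conj_eval_eq_eval_transpose {M : Matrix (Fin k) (Fin k) (SmoothFunction n)}
    (hM : ∀ z a b, eval z (M a b) = (starRingEnd ℂ) (eval z (M b a))) :
    (fun z a b => (starRingEnd ℂ) (eval z (M a b))) = fun z a b => eval z (M.transpose a b) := by
  funext z a b
  simp [hM z a b]

theorem pi_single_eval (ψ : SmoothFunction n) (b : Fin k) :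
    (fun z => Pi.single b (eval z ψ)) = fun z c => eval z (Pi.single (M := fun _ => _) b ψ c) := by
  funext z c
  by_cases h : c = b <;> simp [h]

end PhaseSpace

open PhaseSpace SmoothFunction CommutingDerivations

theorem hybrid_liouvillian_remarkable_relation_general (n k : ℕ) (ℏ : ℝ)
    (A B : PS n → Fin k → Fin k → ℂ)
    (hA : ContDiff ℝ (⊤ : ℕ∞) A) (hB : ContDiff ℝ (⊤ : ℕ∞) B)
    (hAherm : ∀ z a b, A z a b = (starRingEnd ℂ) (A z b a))
    (hBherm : ∀ z a b, B z a b = (starRingEnd ℂ) (B z b a))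
    (ψ : PS n → ℂ) (hψ : ContDiff ℝ (⊤ : ℕ∞) ψ) :
    ∀ (z : PS n) (a b : Fin k),
      (LHyb ℏ A (fun w => LHyb ℏ B (fun w' => Pi.single b (ψ w')) w) z a
          - LHyb ℏ B (fun w => LHyb ℏ A (fun w' => Pi.single b (ψ w')) w) z a)
        + (LHyb ℏ (fun w a' b' => (starRingEnd ℂ) (A w a' b'))
              (fun w => LHyb ℏ (fun w' a' b' => (starRingEnd ℂ) (B w' a' b'))
                (fun w' => Pi.single a (ψ w')) w) z b
            - LHyb ℏ (fun w a' b' => (starRingEnd ℂ) (B w a' b'))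
              (fun w => LHyb ℏ (fun w' a' b' => (starRingEnd ℂ) (A w' a' b'))
                (fun w' => Pi.single a (ψ w')) w) z b)
        = Complex.I * ℏ *
            LHyb ℏ (fun w a' b' => mpb A B w a' b' - mpb B A w a' b')
              (fun w' => Pi.single b (ψ w')) z a := by
  intro z a b
  obtain ⟨A, rfl⟩ := exists_matrix_smoothFunction hA
  obtain ⟨B, rfl⟩ := exists_matrix_smoothFunction hB
  obtain ⟨ψ, rfl⟩ : ∃ ψ' : SmoothFunction n, ψ = fun z => eval z ψ' := ⟨mk ψ hψ, rfl⟩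
  rw [conj_eval_eq_eval_transpose hAherm, conj_eval_eq_eval_transpose hBherm, pi_single_eval,
    pi_single_eval, mpb_sub_mpb_eval]
  simp only [LHyb_eval]
  simpa using congrArg (eval z) (matrixLiouvillian_remarkable_relation dirDeriv_comm
    dirDeriv_qDir_momentum dirDeriv_pDir_momentum (I * ℏ) A B ψ a b)

/-- Remarkable algebraic relation for hybrid Liouvillians
(componentwise form):
`([L̂_Â,L̂_B̂](ψ e_b))_a + ([L̂_Ā,L̂_B̄](ψ e_a))_b = iℏ (L̂_{{Â,B̂}−{B̂,Â}}(ψ e_b))_a`. -/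
theorem hybrid_liouvillian_remarkable_relation (n k : ℕ) (ℏ : ℝ) (hℏ : 0 < ℏ)
    (A B : PS n → Fin k → Fin k → ℂ)
    (hA : ContDiff ℝ (⊤ : ℕ∞) A) (hB : ContDiff ℝ (⊤ : ℕ∞) B)
    (hAherm : ∀ z a b, A z a b = (starRingEnd ℂ) (A z b a))
    (hBherm : ∀ z a b, B z a b = (starRingEnd ℂ) (B z b a))
    (ψ : PS n → ℂ) (hψ : ContDiff ℝ (⊤ : ℕ∞) ψ) :
    ∀ (z : PS n) (a b : Fin k),
      (LHyb ℏ A (fun w => LHyb ℏ B (fun w' => Pi.single b (ψ w')) w) z a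
          - LHyb ℏ B (fun w => LHyb ℏ A (fun w' => Pi.single b (ψ w')) w) z a)
        + (LHyb ℏ (fun w a' b' => (starRingEnd ℂ) (A w a' b'))
              (fun w => LHyb ℏ (fun w' a' b' => (starRingEnd ℂ) (B w' a' b'))
                (fun w' => Pi.single a (ψ w')) w) z b
            - LHyb ℏ (fun w a' b' => (starRingEnd ℂ) (B w a' b'))
              (fun w => LHyb ℏ (fun w' a' b' => (starRingEnd ℂ) (A w' a' b'))
                (fun w' => Pi.single a (ψ w')) w) z b)
        = Complex.I * ℏ *
            LHyb ℏ (fun w a' b' => mpb A B w a' b' - mpb B A w a' b')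
              (fun w' => Pi.single b (ψ w')) z a :=
  hybrid_liouvillian_remarkable_relation_general n k ℏ A B hA hB hAherm hBherm ψ hψ
end
end
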